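/- arXiv:1009.3394 — 2 statements merged into one kernel-verified Lean document; each statement's English description precedes it below -/
import Mathlib

section
/- Let a ≥ 3 be an odd natural number and let α, β, γ be positive real numbers with α ≥ β and α ≥ γ. Then for every t ∈ ℝ, |−α + β·e^{−2it} + γ·e^{−iat}| ≤ ((α+β+γ)² − (1 − cos(π/a))·βγ)^{1/2}. -/
/-!
Expanding the square, `(α + β + γ)² - ‖z‖²` equals
`2αβ (1 + cos 2t) + 2αγ (1 + cos at) + 2βγ (1 - cos (2 - a)t)`, and as `α ≥ β, γ` it is at least
`2βγ (3 + cos 2t + cos at - cos (2 - a)t) = 4βγ (2 - sin² t - sin t · sin (a - 1)t)`.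
With `δ = π / 2a` and `1 - cos (π / a) = 2 sin² δ ≤ 4 (1 - cos δ)`, it remains to show
`sin t · sin (a - 1)t ≤ cos δ`. If `|cos t| ≥ sin δ` then `|sin t| ≤ cos δ`. Otherwise
`t = π/2 + kπ + u` with `|u| < δ`; since `a - 1` is even, `|sin (a - 1)t| = |sin (a - 1)u|`,
and `|(a - 1)u| ≤ π/2 - δ`.
-/

open Real

lemma abs_sin_le_sin_of_abs_le {x y : ℝ} (hxy : |x| ≤ y) (hy : y ≤ π / 2) : |sin x| ≤ sin y := by
  rw [abs_sin_eq_sin_abs_of_abs_le_pi (by linarith [pi_pos])]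
  exact sin_le_sin_of_le_of_le_pi_div_two (by linarith [abs_nonneg x, pi_pos]) hy hxy

lemma exists_eq_add_pi_div_two_add_int_mul_pi (t : ℝ) :
    ∃ (k : ℤ) (u : ℝ), |u| ≤ π / 2 ∧ t = u + π / 2 + k * π := by
  set k := round ((t - π / 2) / π)
  refine ⟨k, t - π / 2 - k * π, ?_, by ring⟩
  have hu : t - π / 2 - k * π = ((t - π / 2) / π - k) * π := by field_simp
  rw [hu, abs_mul, abs_of_pos pi_pos]
  nlinarith [pi_pos, abs_sub_round ((t - π / 2) / π)]

lemma sin_mul_sin_two_mul_le_cos (m : ℕ) (t : ℝ) :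
    sin t * sin (2 * m * t) ≤ cos (π / (2 * (2 * m + 1))) := by
  set δ := π / (2 * (2 * m + 1)) with hδ_def
  have hδ : 0 ≤ δ := by positivity
  have hmδ : 2 * m * δ = π / 2 - δ := by rw [hδ_def]; field_simp; ring
  have hδπ : δ ≤ π / 2 := by nlinarith [(by positivity : (0 : ℝ) ≤ 2 * m * δ)]
  have hc : 0 ≤ cos δ := cos_nonneg_of_neg_pi_div_two_le_of_le (by linarith) hδπ
  have hprod : sin t * sin (2 * m * t) ≤ |sin t| * |sin (2 * m * t)| := by
    rw [← abs_mul]; exact le_abs_self _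
  by_cases hcos : sin δ ≤ |cos t|
  · have hsin : |sin t| ≤ cos δ := by
      have hsq : sin δ ^ 2 ≤ cos t ^ 2 := by
        rw [← sq_abs (cos t)]
        exact pow_le_pow_left₀ (sin_nonneg_of_nonneg_of_le_pi hδ (by linarith)) hcos 2
      exact abs_le_of_sq_le_sq (by linarith [sin_sq_add_cos_sq t, sin_sq_add_cos_sq δ]) hc
    nlinarith [abs_sin_le_one (2 * m * t), abs_nonneg (sin t)]
  · obtain ⟨k, u, hu, rfl⟩ := exists_eq_add_pi_div_two_add_int_mul_pi t
    have hcos_eq : |cos (u + π / 2 + k * π)| = |sin u| := by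
      simp [cos_add_int_mul_pi, cos_add_pi_div_two, abs_mul]
    have huδ : |u| < δ := by
      by_contra! h
      apply hcos
      rw [hcos_eq, abs_sin_eq_sin_abs_of_abs_le_pi (by linarith [pi_pos])]
      exact sin_le_sin_of_le_of_le_pi_div_two (by linarith) hu h
    have hsin_eq : |sin (2 * m * (u + π / 2 + k * π))| = |sin (2 * m * u)| := by
      have : 2 * m * (u + π / 2 + k * π) = 2 * m * u + ((m * (2 * k + 1) : ℤ) : ℝ) * π := by
        push_cast; ring
      rw [this, sin_add_int_mul_pi, abs_mul, abs_zpow, abs_neg, abs_one, one_zpow, one_mul]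
    have hsin : |sin (2 * m * (u + π / 2 + k * π))| ≤ cos δ := by
      rw [hsin_eq, ← sin_pi_div_two_sub]
      refine abs_sin_le_sin_of_abs_le ?_ (by linarith)
      rw [← hmδ, abs_mul, abs_of_nonneg (by positivity : (0 : ℝ) ≤ 2 * m)]
      exact mul_le_mul_of_nonneg_left huδ.le (by positivity)
    nlinarith [abs_sin_le_one (u + π / 2 + k * π),
      abs_nonneg (sin (2 * m * (u + π / 2 + k * π)))]

lemma one_sub_cos_pi_div_le {a : ℕ} (ha : Odd a) (t : ℝ) :
    1 - cos (π / a) ≤ 2 * (3 + cos (2 * t) + cos (a * t) - cos (2 * t - a * t)) := by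
  obtain ⟨m, rfl⟩ := ha
  have hkey := sin_mul_sin_two_mul_le_cos m t
  have hsum : 3 + cos (2 * t) + cos ((2 * m + 1) * t) - cos (2 * t - (2 * m + 1) * t) =
      4 - 2 * sin t ^ 2 - 2 * (sin t * sin (2 * m * t)) := by
    rw [show (2 * m + 1) * t = 2 * m * t + t by ring,
      show 2 * t - (2 * m * t + t) = t - 2 * m * t by ring, cos_add, cos_sub, cos_two_mul, cos_sq']
    ring
  have hhalf : cos (π / (2 * m + 1)) = 2 * cos (π / (2 * (2 * m + 1))) ^ 2 - 1 := by
    rw [← cos_two_mul]; congr 1; field_simp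
  push_cast
  rw [hsum, hhalf]
  nlinarith [cos_le_one (π / (2 * (2 * m + 1))), sin_sq_le_one t]

lemma norm_sq_neg_add_mul_exp_add_mul_exp (α β γ x y : ℝ) :
    ‖-(α : ℂ) + β * Complex.exp (-Complex.I * x) + γ * Complex.exp (-Complex.I * y)‖ ^ 2 =
      (α + β + γ) ^ 2 - 2 * α * β * (1 + cos x) - 2 * α * γ * (1 + cos y) -
        2 * β * γ * (1 - cos (x - y)) := by
  rw [Complex.sq_norm, Complex.normSq_apply]
  simp only [neg_mul, Complex.add_re, Complex.neg_re, Complex.ofReal_re, Complex.mul_re,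
    Complex.exp_re, Complex.I_re, zero_mul, Complex.I_im, Complex.ofReal_im, mul_zero, sub_self,
    neg_zero, exp_zero, Complex.neg_im, Complex.mul_im, one_mul, zero_add, cos_neg, Complex.exp_im,
    sin_neg, mul_neg, sub_zero, Complex.add_im, add_zero, cos_sub]
  linear_combination β ^ 2 * sin_sq_add_cos_sq x + γ ^ 2 * sin_sq_add_cos_sq y

lemma norm_neg_add_mul_exp_add_mul_exp_sq_le {α β γ : ℝ} (hβ : 0 ≤ β) (hγ : 0 ≤ γ)
    (hβα : β ≤ α) (hγα : γ ≤ α) (x y : ℝ) :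
    ‖-(α : ℂ) + β * Complex.exp (-Complex.I * x) + γ * Complex.exp (-Complex.I * y)‖ ^ 2 ≤
      (α + β + γ) ^ 2 - 2 * β * γ * (3 + cos x + cos y - cos (x - y)) := by
  rw [norm_sq_neg_add_mul_exp_add_mul_exp]
  have hx : 0 ≤ (α - γ) * β * (1 + cos x) :=
    mul_nonneg (mul_nonneg (by linarith) hβ) (by linarith [neg_one_le_cos x])
  have hy : 0 ≤ (α - β) * γ * (1 + cos y) :=
    mul_nonneg (mul_nonneg (by linarith) hγ) (by linarith [neg_one_le_cos y])
  linear_combination 2 * hx + 2 * hy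

theorem abs_triple_exp_le'_general (a : ℕ) (hodd : Odd a) (α β γ : ℝ)
    (hβ : 0 < β) (hγ : 0 < γ) (hβα : β ≤ α) (hγα : γ ≤ α) (t : ℝ) :
    ‖(-(α : ℂ) + (β : ℂ) * Complex.exp (-Complex.I * (2 * (t : ℂ))) +
        (γ : ℂ) * Complex.exp (-Complex.I * ((a : ℂ) * (t : ℂ))))‖ ≤
      Real.sqrt ((α + β + γ) ^ 2 - (1 - Real.cos (Real.pi / a)) * (β * γ)) := by
  have hnorm := norm_neg_add_mul_exp_add_mul_exp_sq_le hβ.le hγ.le hβα hγα (2 * t) (a * t)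
  have htrig := mul_le_mul_of_nonneg_left (one_sub_cos_pi_div_le hodd t) (mul_pos hβ hγ).le
  push_cast at hnorm
  rw [← abs_norm]
  exact abs_le_sqrt (by linarith)

/-- For odd `a ≥ 3` and positive reals `α ≥ β, γ`, for every `t ∈ ℝ`,
`|−α + β e^{−2it} + γ e^{−iat}| ≤ ((α+β+γ)² − (1 − cos(π/a)) βγ)^{1/2}`. -/
theorem abs_triple_exp_le' (a : ℕ) (ha : 3 ≤ a) (hodd : Odd a) (α β γ : ℝ)
    (hα : 0 < α) (hβ : 0 < β) (hγ : 0 < γ) (hβα : β ≤ α) (hγα : γ ≤ α) (t : ℝ) :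
    ‖(-(α : ℂ) + (β : ℂ) * Complex.exp (-Complex.I * (2 * (t : ℂ))) +
        (γ : ℂ) * Complex.exp (-Complex.I * ((a : ℂ) * (t : ℂ))))‖ ≤
      Real.sqrt ((α + β + γ) ^ 2 - (1 - Real.cos (Real.pi / a)) * (β * γ)) :=
  abs_triple_exp_le'_general a hodd α β γ hβ hγ hβα hγα t
end

section
/- Let k ≥ 1, let m₁,…,m_{2k} be positive integers with m₁ ≥ 2, let G = Γ(m₁,…,m_{2k}) with Laplacian L, and let 2 ≤ j ≤ 2k. Define the n×n matrix P_j entrywise by: (P_j)_{ab} = m_j/(σ_{j−1}σ_j) if a,b ∈ B₁ ∪ ⋯ ∪ B_{j−1}; (P_j)_{ab} = −1/σ_j if exactly one of a,b lies in B₁ ∪ ⋯ ∪ B_{j−1} and the other lies in B_j; (P_j)_{ab} = δ_{ab} − 1/σ_j if a,b ∈ B_j; and (P_j)_{ab} = 0 otherwise. Then P_j is symmetric, P_j² = P_j, and L·P_j = λ·P_j, where λ = λ₀(j) = m_{j+1}+m_{j+3}+⋯+m_{2k} if j is odd and λ = λ₁(j) = σ_j + m_{j+2}+m_{j+4}+⋯+m_{2k}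 if j is even. -/
open Finset Matrix

/-- `sig m l = m 1 + ⋯ + m l` (block sizes `m` are indexed starting from 1). -/
def sig (m : ℕ → ℕ) (l : ℕ) : ℕ := ∑ i ∈ Finset.Icc 1 l, m i

/-- The (1-based) index of the block containing the (0-based) vertex `v`:
`blk r m v = b` iff `sig m (b-1) ≤ v < sig m b`. -/
def blk (r : ℕ) (m : ℕ → ℕ) (v : ℕ) : ℕ :=
  1 + ((Finset.Icc 1 r).filter (fun l => sig m l ≤ v)).card

/-- `Γ(m₁,…,m_r) = ((((O_{m₁} ∨ K_{m₂}) ∪ O_{m₃}) ∨ K_{m₄}) ⋯ )`: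
the odd-indexed blocks are added as sets of isolated vertices (disjoint union with `O_{m_l}`)
and the even-indexed blocks are cliques joined to everything already present.  Hence two
distinct vertices are adjacent iff the larger of their two block indices is even.  Vertices
are labelled `0,…,n-1` (`n = m₁+⋯+m_r`), block `B₁` first, then `B₂`, etc. -/
def GammaEven (r : ℕ) (m : ℕ → ℕ) : SimpleGraph (Fin (sig m r)) where
  Adj u v := u ≠ v ∧ (max (blk r m (u : ℕ)) (blk r m (v : ℕ))) % 2 = 0
  symm := by
    constructor
    intro u v h
    exact ⟨h.1.symm, by rw [max_comm]; exact h.2⟩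
  loopless := by constructor; intro u h; exact h.1 rfl

instance (r : ℕ) (m : ℕ → ℕ) : DecidableRel (GammaEven r m).Adj := fun u v =>
  decidable_of_iff (u ≠ v ∧ (max (blk r m (u : ℕ)) (blk r m (v : ℕ))) % 2 = 0) Iff.rfl

/-- `U_t = exp(−itL)`, where `L` is the Laplacian matrix of `G` (diagonal entries the
degrees, entry `−1` for each edge, `0` otherwise). -/
noncomputable def Ut {n : ℕ} (G : SimpleGraph (Fin n)) [DecidableRel G.Adj] (t : ℝ) :
    Matrix (Fin n) (Fin n) ℂ :=
  NormedSpace.exp ((-(Complex.I * (t : ℂ))) • G.lapMatrix ℂ)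

/-- The transfer probability `p_G(i,j,t) = |(U_t)_{j,i}|²`. -/
noncomputable def transferProb {n : ℕ} (G : SimpleGraph (Fin n)) [DecidableRel G.Adj]
    (i j : Fin n) (t : ℝ) : ℝ :=
  ‖Ut G t j i‖ ^ 2

/-- `λ₀(j) = m_{j+1} + m_{j+3} + ⋯ + m_{2k}` (the indices run over `j+1, j+3, …`). -/
def lam0 (k : ℕ) (m : ℕ → ℕ) (j : ℕ) : ℕ :=
  ∑ l ∈ (Finset.Icc (j + 1) (2 * k)).filter (fun l => (l - j) % 2 = 1), m l

/-- `λ₁(j) = σ_j + m_{j+2} + m_{j+4} + ⋯ + m_{2k}` (the sum runs over `j+2, j+4, …`). -/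
def lam1 (k : ℕ) (m : ℕ → ℕ) (j : ℕ) : ℕ :=
  sig m j + ∑ l ∈ (Finset.Icc (j + 2) (2 * k)).filter (fun l => (l - j) % 2 = 0), m l

/-! Write `V_l` for the union of the first `l` blocks and `C_S` for the centering matrix of a vertex
set `S` (the orthogonal projection onto the vectors supported on `S` with coordinate sum zero). The
entries of `P_j` are exactly those of `C_{V_j} - C_{V_{j-1}}`, and `C_S C_T = C_S` for `S ⊆ T`, so
`P_j` is a symmetric idempotent. Each column `x` of `P_j` is supported on `V_j`, constant on
`V_{j-1}` and has sum zero. A vertex outside `V_j` is joined to all of `V_j` or to none of it, so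
`(Lx)_a = 0` there. At a vertex `a` of `V_j`, each later even block is joined to `a` and
contributes `m_l x_a`; inside `V_j`, since `x` is constant on `V_{j-1}`, only the join with `B_j`
matters, which exists iff `j` is even and then contributes `σ_j x_a` because `x` sums to zero. -/

namespace Matrix

variable {V K : Type*} [Fintype V] [DecidableEq V] [Field K]

def centeringMatrix (S : Finset V) : Matrix V V K :=
  of fun a b => if a ∈ S ∧ b ∈ S then (if a = b then 1 else 0) - (#S : K)⁻¹ else 0

omit [Fintype V] in
lemma centeringMatrix_apply (S : Finset V) (a b : V) :
    (centeringMatrix S : Matrix V V K) a b =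
      if a ∈ S ∧ b ∈ S then (if a = b then 1 else 0) - (#S : K)⁻¹ else 0 := rfl

omit [Fintype V] in
lemma centeringMatrix_apply_of_notMem {S : Finset V} {a : V} (ha : a ∉ S) (b : V) :
    (centeringMatrix S : Matrix V V K) a b = 0 := by
  simp [centeringMatrix_apply, ha]

omit [Fintype V] in
lemma isSymm_centeringMatrix (S : Finset V) : (centeringMatrix S : Matrix V V K).IsSymm :=
  IsSymm.ext fun a b => by simp only [centeringMatrix_apply, and_comm, eq_comm]

omit [Fintype V] in
lemma sub_centeringMatrix_apply_eq_of_mem {S T : Finset V} (hST : S ⊆ T) {a a' : V}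
    (ha : a ∈ S) (ha' : a' ∈ S) (b : V) :
    (centeringMatrix T - centeringMatrix S : Matrix V V K) a b =
      (centeringMatrix T - centeringMatrix S : Matrix V V K) a' b := by
  by_cases hb : b ∈ S
  · simp [centeringMatrix_apply, ha, ha', hb, hST ha, hST ha', hST hb]
  · have hab : a ≠ b := fun h => hb (h ▸ ha)
    have hab' : a' ≠ b := fun h => hb (h ▸ ha')
    simp [centeringMatrix_apply, ha, ha', hb, hST ha, hST ha', hab, hab']

variable [CharZero K]

lemma sum_centeringMatrix_apply (S : Finset V) (b : V) :
    ∑ a, (centeringMatrix S : Matrix V V K) a b = 0 := by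
  by_cases hb : b ∈ S
  · have hS : (#S : K) ≠ 0 := Nat.cast_ne_zero.2 (card_ne_zero.2 ⟨b, hb⟩)
    simp [centeringMatrix_apply, hb, sum_sub_distrib, hS]
  · simp [centeringMatrix_apply, hb]

lemma centeringMatrix_mul_of_subset {S T : Finset V} (hST : S ⊆ T) :
    (centeringMatrix S : Matrix V V K) * centeringMatrix T = centeringMatrix S := by
  ext a b
  rw [mul_apply]
  by_cases ha : a ∈ S
  · have hS : (#S : K) ≠ 0 := Nat.cast_ne_zero.2 (card_ne_zero.2 ⟨a, ha⟩)
    by_cases hb : b ∈ T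
    · have hterm : ∀ c, (centeringMatrix S : Matrix V V K) a c * centeringMatrix T c b =
          if c ∈ S then
            ((if a = c then 1 else 0) - (#S : K)⁻¹) * ((if c = b then 1 else 0) - (#T : K)⁻¹)
          else 0 := by
        intro c
        by_cases hc : c ∈ S
        · simp [centeringMatrix_apply, ha, hb, hc, hST hc]
        · simp [centeringMatrix_apply, hc]
      simp only [hterm, sum_ite_mem, univ_inter, sub_mul, mul_sub,
        sum_sub_distrib, ite_mul, mul_ite, one_mul, mul_one, zero_mul, mul_zero]
      simp [ha, centeringMatrix_apply, hS]
    · have hbS : b ∉ S := fun h => hb (hST h)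
      simp [centeringMatrix_apply, ha, hb, hbS]
  · simp [centeringMatrix_apply, ha]

lemma mul_centeringMatrix_of_subset {S T : Finset V} (hST : S ⊆ T) :
    (centeringMatrix T : Matrix V V K) * centeringMatrix S = centeringMatrix S := by
  rw [← (isSymm_centeringMatrix S).eq, ← (isSymm_centeringMatrix T).eq, ← transpose_mul,
    centeringMatrix_mul_of_subset hST]

lemma sub_centeringMatrix_mul_self {S T : Finset V} (hST : S ⊆ T) :
    (centeringMatrix T - centeringMatrix S : Matrix V V K) * (centeringMatrix T - centeringMatrix S)
      = centeringMatrix T - centeringMatrix S := by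
  rw [sub_mul, mul_sub, mul_sub, centeringMatrix_mul_of_subset le_rfl,
    centeringMatrix_mul_of_subset le_rfl, centeringMatrix_mul_of_subset hST,
    mul_centeringMatrix_of_subset hST]
  abel

end Matrix

namespace SimpleGraph

variable {V R : Type*} [Fintype V] [DecidableEq V] [CommRing R]

lemma lapMatrix_mulVec_apply_eq_sum_adj (G : SimpleGraph V) [DecidableRel G.Adj] (x : V → R)
    (a : V) : (G.lapMatrix R *ᵥ x) a = ∑ c, if G.Adj a c then x a - x c else 0 := by
  rw [lapMatrix_mulVec_apply, ← sum_filter, ← neighborFinset_eq_filter,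
    sum_sub_distrib, sum_const, card_neighborFinset_eq_degree, nsmul_eq_mul]

section EvenMax

variable (β : V → ℕ) (j : ℕ) {x : V → R} (hsupp : ∀ v, j < β v → x v = 0)
include hsupp

omit [DecidableEq V] in
lemma sum_filter_not_le_ite_even_max (a : V) :
    ∑ c with ¬ β c ≤ j, (if Even (max (β a) (β c)) then x a - x c else 0) =
      #{v | j < β v ∧ Even (β v)} * x a := by
  have hterm : ∀ c ∈ ({c | ¬ β c ≤ j} : Finset V),
      (if Even (max (β a) (β c)) then x a - x c else 0) = if Even (β c) then x a else 0 := by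
    intro c hc
    have hc : j < β c := not_le.1 (mem_filter.1 hc).2
    rw [hsupp c hc, sub_zero]
    by_cases ha : β a ≤ j
    · rw [max_eq_right (by omega)]
    · simp [hsupp a (not_le.1 ha)]
  rw [sum_congr rfl hterm, ← sum_filter, filter_filter, sum_const, nsmul_eq_mul]
  simp only [not_le]

omit [DecidableEq V] in
lemma sum_filter_le_ite_even_max (hconst : ∀ u v, β u < j → β v < j → x u = x v)
    (hsum : ∑ v, x v = 0) (a : V) :
    ∑ c with β c ≤ j, (if Even (max (β a) (β c)) then x a - x c else 0) =
      (if Even j then #{v | β v ≤ j} else 0 : ℕ) * x a := by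
  have hsumT : ∑ c with β c ≤ j, x c = 0 := by
    rw [sum_filter_of_ne fun c _ hc => ?_, hsum]
    by_contra h
    exact hc (hsupp c (not_le.1 h))
  by_cases ha : β a ≤ j
  · have hterm : ∀ c ∈ ({c | β c ≤ j} : Finset V),
        (if Even (max (β a) (β c)) then x a - x c else 0) = if Even j then x a - x c else 0 := by
      intro c hc
      have hc : β c ≤ j := (mem_filter.1 hc).2
      by_cases hlt : β a < j ∧ β c < j
      · simp [hconst a c hlt.1 hlt.2]
      · rw [show max (β a) (β c) = j by omega]
    rw [sum_congr rfl hterm]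
    split_ifs
    · rw [sum_sub_distrib, hsumT, sum_const, nsmul_eq_mul]
      simp
    · simp
  · have hterm : ∀ c ∈ ({c | β c ≤ j} : Finset V),
        (if Even (max (β a) (β c)) then x a - x c else 0) =
          -((if Even (β a) then 1 else 0) * x c) := by
      intro c hc
      have hc : β c ≤ j := (mem_filter.1 hc).2
      rw [max_eq_left (by omega), hsupp a (not_le.1 ha)]
      split_ifs <;> simp
    rw [sum_congr rfl hterm, sum_neg_distrib, ← mul_sum, hsumT, hsupp a (not_le.1 ha)]
    simp

lemma lapMatrix_mulVec_eq_smul_of_adj_iff_even_max {G : SimpleGraph V} [DecidableRel G.Adj]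
    (hG : ∀ u v, G.Adj u v ↔ u ≠ v ∧ Even (max (β u) (β v)))
    (hconst : ∀ u v, β u < j → β v < j → x u = x v) (hsum : ∑ v, x v = 0) :
    G.lapMatrix R *ᵥ x =
      (((if Even j then #{v | β v ≤ j} else 0) + #{v | j < β v ∧ Even (β v)} : ℕ) : R) •
        x := by
  ext a
  have hadj : ∀ c, (if G.Adj a c then x a - x c else 0) =
      if Even (max (β a) (β c)) then x a - x c else 0 := by
    intro c
    by_cases hac : a = c
    · simp [hac]
    · simp [hG, hac]
  rw [lapMatrix_mulVec_apply_eq_sum_adj, sum_congr rfl fun c _ => hadj c,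
    ← sum_filter_add_sum_filter_not _ (β · ≤ j),
    sum_filter_le_ite_even_max β j hsupp hconst hsum, sum_filter_not_le_ite_even_max β j hsupp,
    Pi.smul_apply, smul_eq_mul]
  push_cast
  ring

end EvenMax

end SimpleGraph

lemma sig_mono (m : ℕ → ℕ) : Monotone (sig m) :=
  fun _ _ hab => sum_le_sum_of_subset (Icc_subset_Icc_right hab)

lemma sig_succ (m : ℕ → ℕ) (l : ℕ) : sig m (l + 1) = sig m l + m (l + 1) :=
  sum_Icc_succ_top (by omega) m

lemma blk_le_iff (m : ℕ → ℕ) {r l : ℕ} (hl : l ≤ r) (v : ℕ) :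
    blk r m v ≤ l ↔ v < sig m l := by
  unfold blk
  constructor
  · intro h
    by_contra! hv
    have hsub : Icc 1 l ⊆ {l' ∈ Icc 1 r | sig m l' ≤ v} := fun x hx => by
      simp only [mem_filter, mem_Icc] at hx ⊢
      exact ⟨⟨hx.1, hx.2.trans hl⟩, (sig_mono m hx.2).trans hv⟩
    have := card_le_card hsub
    rw [Nat.card_Icc] at this
    omega
  · intro h
    have hsub : {l' ∈ Icc 1 r | sig m l' ≤ v} ⊆ Icc 1 (l - 1) := fun x hx => by
      simp only [mem_filter, mem_Icc] at hx ⊢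
      have : ¬ l ≤ x := fun hlx => by have := sig_mono m hlx; omega
      omega
    have := card_le_card hsub
    rw [Nat.card_Icc] at this
    have : l ≠ 0 := by rintro rfl; simp [sig] at h
    omega

lemma one_le_blk (r : ℕ) (m : ℕ → ℕ) (v : ℕ) : 1 ≤ blk r m v := by
  unfold blk; omega

lemma blk_le (m : ℕ → ℕ) (r : ℕ) (v : Fin (sig m r)) : blk r m v ≤ r :=
  (blk_le_iff m le_rfl v).2 v.2

def firstBlocks (r : ℕ) (m : ℕ → ℕ) (l : ℕ) : Finset (Fin (sig m r)) :=
  {v | blk r m v ≤ l}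

@[simp]
lemma mem_firstBlocks {r : ℕ} {m : ℕ → ℕ} {l : ℕ} {v : Fin (sig m r)} :
    v ∈ firstBlocks r m l ↔ blk r m v ≤ l := by
  simp [firstBlocks]

lemma firstBlocks_mono (r : ℕ) (m : ℕ → ℕ) : Monotone (firstBlocks r m) :=
  fun _ _ hl _ hv => mem_firstBlocks.2 ((mem_firstBlocks.1 hv).trans hl)

lemma card_firstBlocks (m : ℕ → ℕ) {r l : ℕ} (hl : l ≤ r) :
    #(firstBlocks r m l) = sig m l := by
  simp only [firstBlocks, blk_le_iff m hl, Fin.card_filter_val_lt,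
    min_eq_right (sig_mono m hl)]

lemma card_filter_blk_eq (m : ℕ → ℕ) {r l : ℕ} (hl : l ≤ r) (hl1 : 1 ≤ l) :
    #{v : Fin (sig m r) | blk r m v = l} = m l := by
  have hsplit := card_filter_add_card_filter_not (s := firstBlocks r m l)
    (fun v : Fin (sig m r) => blk r m v ≤ l - 1)
  have hlow : (firstBlocks r m l).filter (fun v : Fin (sig m r) => blk r m v ≤ l - 1) =
      firstBlocks r m (l - 1) := by
    ext v; simp only [mem_filter, mem_firstBlocks]; omega
  have htop : (firstBlocks r m l).filter (fun v : Fin (sig m r) => ¬ blk r m v ≤ l - 1) =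
      univ.filter (fun v : Fin (sig m r) => blk r m v = l) := by
    ext v; simp only [mem_filter, mem_firstBlocks, mem_univ, true_and]; omega
  rw [hlow, htop, card_firstBlocks m (by omega), card_firstBlocks m hl] at hsplit
  have hs := sig_succ m (l - 1)
  rw [Nat.sub_add_cancel hl1] at hs
  omega

lemma card_filter_blk_gt_even (m : ℕ → ℕ) (r j : ℕ) :
    #{v : Fin (sig m r) | j < blk r m v ∧ Even (blk r m v)} =
      ∑ l ∈ Icc (j + 1) r with Even l, m l := by
  rw [card_eq_sum_card_fiberwise (f := fun v : Fin (sig m r) => blk r m v)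
    (s := {v : Fin (sig m r) | j < blk r m v ∧ Even (blk r m v)})
    (t := {l ∈ Icc (j + 1) r | Even l}) fun v hv => by
      simp only [coe_filter, Set.mem_ofPred_eq, mem_univ, true_and, mem_Icc] at hv ⊢
      exact ⟨⟨hv.1, blk_le m r v⟩, hv.2⟩]
  refine sum_congr rfl fun l hl => ?_
  simp only [mem_filter, mem_Icc] at hl
  rw [← card_filter_blk_eq m hl.1.2 (by omega), filter_filter]
  congr 1
  ext v
  simp only [mem_filter, mem_univ, true_and]
  constructor
  · exact fun h => h.2
  · rintro rfl; exact ⟨⟨by omega, hl.2⟩, rfl⟩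

lemma ite_odd_lam0_lam1_eq (k : ℕ) (m : ℕ → ℕ) (j : ℕ) :
    (if Odd j then lam0 k m j else lam1 k m j) =
      (if Even j then sig m j else 0) + ∑ l ∈ Icc (j + 1) (2 * k) with Even l, m l := by
  rcases Nat.even_or_odd j with hj | hj
  · rw [if_neg (Nat.not_odd_iff_even.2 hj), if_pos hj, lam1]
    congr 2
    ext l
    simp only [mem_filter, mem_Icc, Nat.even_iff]
    rw [Nat.even_iff] at hj
    omega
  · rw [if_pos hj, if_neg (Nat.not_even_iff_odd.2 hj), zero_add, lam0]
    congr 1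
    ext l
    simp only [mem_filter, mem_Icc, Nat.even_iff]
    rw [Nat.odd_iff] at hj
    omega

lemma gammaEven_adj_iff (r : ℕ) (m : ℕ → ℕ) (u v : Fin (sig m r)) :
    (GammaEven r m).Adj u v ↔ u ≠ v ∧ Even (max (blk r m u) (blk r m v)) := by
  rw [Nat.even_iff]; rfl

open SimpleGraph

section Gamma

variable {K : Type*} [Field K] [CharZero K] (m : ℕ → ℕ) {r j : ℕ}

lemma sub_centeringMatrix_firstBlocks_apply (hj : j ≤ r) (a b : Fin (sig m r)) :
    (centeringMatrix (firstBlocks r m j) - centeringMatrix (firstBlocks r m (j - 1)) :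
        Matrix _ _ K) a b =
      if blk r m a < j ∧ blk r m b < j then (m j : K) / ((sig m (j - 1) : K) * (sig m j : K))
      else if (blk r m a < j ∧ blk r m b = j) ∨ (blk r m a = j ∧ blk r m b < j) then
        -(1 / (sig m j : K))
      else if blk r m a = j ∧ blk r m b = j then (if a = b then 1 else 0) - 1 / (sig m j : K)
      else 0 := by
  have hfrac : blk r m a < j → (m j : K) / ((sig m (j - 1) : K) * (sig m j : K)) =
      (sig m (j - 1) : K)⁻¹ - (sig m j : K)⁻¹ := by
    intro ha
    have hs : (a : ℕ) < sig m (j - 1) := (blk_le_iff m (by omega : j - 1 ≤ r) a).1 (by omega)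
    have ht := sig_succ m (j - 1)
    rw [Nat.sub_add_cancel (by omega)] at ht
    rw [inv_sub_inv (Nat.cast_ne_zero.2 (by omega)) (Nat.cast_ne_zero.2 (by omega)), ht]
    push_cast
    ring
  have ha := one_le_blk r m a
  have hb := one_le_blk r m b
  rw [Matrix.sub_apply, centeringMatrix_apply, centeringMatrix_apply, card_firstBlocks m hj,
    card_firstBlocks m (by omega)]
  simp only [mem_firstBlocks]
  split_ifs <;> first | omega | ring1 | (rw [hfrac (by omega)]; ring1) | (subst_vars; omega)

lemma lapMatrix_gammaEven_mul_sub_centeringMatrix_firstBlocks (hj : j ≤ r) :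
    (GammaEven r m).lapMatrix K *
        (centeringMatrix (firstBlocks r m j) - centeringMatrix (firstBlocks r m (j - 1))) =
      (((if Even j then sig m j else 0) + ∑ l ∈ Icc (j + 1) r with Even l, m l : ℕ) : K) •
        (centeringMatrix (firstBlocks r m j) - centeringMatrix (firstBlocks r m (j - 1))) := by
  have hST := firstBlocks_mono r m (Nat.sub_le j 1)
  ext a b
  have hcol := lapMatrix_mulVec_eq_smul_of_adj_iff_even_max (fun v : Fin (sig m r) => blk r m v)
    j (x := fun c => (centeringMatrix (firstBlocks r m j) -
      centeringMatrix (firstBlocks r m (j - 1)) : Matrix _ _ K) c b)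
    (fun c hc => by
      have hcT : c ∉ firstBlocks r m j := by simpa using hc
      simp [centeringMatrix_apply_of_notMem hcT,
        centeringMatrix_apply_of_notMem (mt (@hST c) hcT)])
    (gammaEven_adj_iff r m)
    (fun c c' hc hc' => sub_centeringMatrix_apply_eq_of_mem hST
      (mem_firstBlocks.2 (by omega)) (mem_firstBlocks.2 (by omega)) b)
    (by simp [sum_sub_distrib, sum_centeringMatrix_apply])
  rw [← firstBlocks, card_firstBlocks m hj, card_filter_blk_gt_even] at hcol
  exact congrFun hcol a

end Gamma

theorem projector_blockwise_general (k : ℕ) (m : ℕ → ℕ)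
    (j : ℕ) (hj2 : j ≤ 2 * k)
    (P : Matrix (Fin (sig m (2 * k))) (Fin (sig m (2 * k))) ℝ)
    (hP : ∀ a b : Fin (sig m (2 * k)), P a b =
      if blk (2 * k) m (a : ℕ) < j ∧ blk (2 * k) m (b : ℕ) < j then
        (m j : ℝ) / ((sig m (j - 1) : ℝ) * (sig m j : ℝ))
      else if (blk (2 * k) m (a : ℕ) < j ∧ blk (2 * k) m (b : ℕ) = j) ∨
              (blk (2 * k) m (a : ℕ) = j ∧ blk (2 * k) m (b : ℕ) < j) then
        -(1 / (sig m j : ℝ))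
      else if blk (2 * k) m (a : ℕ) = j ∧ blk (2 * k) m (b : ℕ) = j then
        (if a = b then 1 else 0) - 1 / (sig m j : ℝ)
      else 0) :
    P.IsSymm ∧ P * P = P ∧
      (GammaEven (2 * k) m).lapMatrix ℝ * P =
        (((if Odd j then lam0 k m j else lam1 k m j : ℕ) : ℝ)) • P := by
  have hPQ : P = centeringMatrix (firstBlocks (2 * k) m j) -
      centeringMatrix (firstBlocks (2 * k) m (j - 1)) :=
    Matrix.ext fun a b => (hP a b).trans (sub_centeringMatrix_firstBlocks_apply m hj2 a b).symm
  rw [hPQ, ite_odd_lam0_lam1_eq]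
  exact ⟨(isSymm_centeringMatrix _).sub (isSymm_centeringMatrix _),
    sub_centeringMatrix_mul_self (firstBlocks_mono _ m (Nat.sub_le j 1)),
    lapMatrix_gammaEven_mul_sub_centeringMatrix_firstBlocks m hj2⟩

/-- For `G = Γ(m₁,…,m_{2k})` with Laplacian `L` and `2 ≤ j ≤ 2k`, the
matrix `P_j` defined blockwise below is symmetric, idempotent, and satisfies
`L·P_j = λ·P_j` with `λ = λ₀(j)` for odd `j` and `λ = λ₁(j)` for even `j`. -/
theorem projector_blockwise (k : ℕ) (hk : 1 ≤ k) (m : ℕ → ℕ)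
    (hm : ∀ i, 1 ≤ i → i ≤ 2 * k → 1 ≤ m i) (hm1 : 2 ≤ m 1)
    (j : ℕ) (hj1 : 2 ≤ j) (hj2 : j ≤ 2 * k)
    (P : Matrix (Fin (sig m (2 * k))) (Fin (sig m (2 * k))) ℝ)
    (hP : ∀ a b : Fin (sig m (2 * k)), P a b =
      if blk (2 * k) m (a : ℕ) < j ∧ blk (2 * k) m (b : ℕ) < j then
        (m j : ℝ) / ((sig m (j - 1) : ℝ) * (sig m j : ℝ))
      else if (blk (2 * k) m (a : ℕ) < j ∧ blk (2 * k) m (b : ℕ) = j) ∨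
              (blk (2 * k) m (a : ℕ) = j ∧ blk (2 * k) m (b : ℕ) < j) then
        -(1 / (sig m j : ℝ))
      else if blk (2 * k) m (a : ℕ) = j ∧ blk (2 * k) m (b : ℕ) = j then
        (if a = b then 1 else 0) - 1 / (sig m j : ℝ)
      else 0) :
    P.IsSymm ∧ P * P = P ∧
      (GammaEven (2 * k) m).lapMatrix ℝ * P =
        (((if Odd j then lam0 k m j else lam1 k m j : ℕ) : ℝ)) • P :=
  projector_blockwise_general k m j hj2 P hP
end
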